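/- Let H be an n×n Hajós matrix. Then the only Hajós vectors contained in the lattice Λ_H are the columns of H. Consequently, if H and H' are Hajós matrices of rank n, then Λ_H = Λ_{H'} if and only if H = H'. -/

import Mathlib

/-- A *Hajós matrix*: lower triangular, 2's on the diagonal, entries in `{0,1}` below. -/
def IsHajosMatrix {n : ℕ} (H : Matrix (Fin n) (Fin n) ℤ) : Prop :=
  (∀ i, H i i = 2) ∧ (∀ i j, i < j → H i j = 0) ∧ (∀ i j, j < i → H i j = 0 ∨ H i j = 1)

/-- `Λ_H`: the sublattice of `ℤⁿ` generated by the columns of `H`. -/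
def hajosLattice {n : ℕ} (H : Matrix (Fin n) (Fin n) ℤ) : AddSubgroup (Fin n → ℤ) :=
  AddSubgroup.closure (Set.range fun j => fun i => H i j)

/-- A *Hajós vector*: its first nonzero entry equals 2 and all later entries are in `{0,1}`. -/
def IsHajosVector {n : ℕ} (v : Fin n → ℤ) : Prop :=
  ∃ k : Fin n, v k = 2 ∧ (∀ j, j < k → v j = 0) ∧ ∀ j, k < j → v j = 0 ∨ v j = 1

/-
Write `u = H c` for `u ∈ Λ_H`. Since `H` is lower triangular with nonzero diagonal, vanishing of
the entries of `u` before position `i` forces `c` to vanish there too, so `u i = 2 c i`: the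
first nonzero entry of `u` is even. If `v ∈ Λ_H` is a Hajós vector with leading entry at `k`,
then `v - H e_k ∈ Λ_H` vanishes up to position `k` and has entries in `{-1, 0, 1}` after it,
so by evenness it is zero. Since the leading `2` of a column of a Hajós matrix sits on the
diagonal, equal lattices force equal columns.
-/

namespace Matrix

variable {ι R : Type*} [Fintype ι] [LinearOrder ι] [Semiring R] {H : Matrix ι ι R}

theorem mulVec_apply_eq_diag_mul_of_forall_lt (hlow : ∀ i j, i < j → H i j = 0) {c : ι → R}
    {i : ι} (hc : ∀ j < i, c j = 0) : (H *ᵥ c) i = H i i * c i := by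
  refine Finset.sum_eq_single i (fun j _ hji => ?_) (by simp)
  rcases hji.lt_or_gt with hji | hij
  · simp [hc j hji]
  · simp [hlow i j hij]

theorem forall_lt_eq_zero_of_mulVec_eq_zero [WellFoundedLT ι] [NoZeroDivisors R]
    (hlow : ∀ i j, i < j → H i j = 0) (hdiag : ∀ i, H i i ≠ 0) {c : ι → R} {i : ι}
    (hc : ∀ j < i, (H *ᵥ c) j = 0) : ∀ j < i, c j = 0 := by
  intro j
  induction j using WellFoundedLT.induction with
  | _ j ih =>
    intro hji
    have hj := hc j hji
    rw [mulVec_apply_eq_diag_mul_of_forall_lt hlow fun m hmj => ih m hmj (hmj.trans hji)] at hj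
    exact (mul_eq_zero.mp hj).resolve_left (hdiag j)

theorem mulVec_apply_eq_diag_mul_of_mulVec_eq_zero [WellFoundedLT ι] [NoZeroDivisors R]
    (hlow : ∀ i j, i < j → H i j = 0) (hdiag : ∀ i, H i i ≠ 0) {c : ι → R} {i : ι}
    (hc : ∀ j < i, (H *ᵥ c) j = 0) : (H *ᵥ c) i = H i i * c i :=
  mulVec_apply_eq_diag_mul_of_forall_lt hlow (forall_lt_eq_zero_of_mulVec_eq_zero hlow hdiag hc)

end Matrix

open Matrix

theorem mem_hajosLattice_iff {n : ℕ} {H : Matrix (Fin n) (Fin n) ℤ} {u : Fin n → ℤ} :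
    u ∈ hajosLattice H ↔ ∃ c, H *ᵥ c = u := by
  rw [hajosLattice, ← Submodule.span_int_eq_addSubgroupClosure, Submodule.mem_toAddSubgroup]
  exact (SetLike.ext_iff.mp H.range_mulVecLin u).symm

theorem col_mem_hajosLattice {n : ℕ} (H : Matrix (Fin n) (Fin n) ℤ) (j : Fin n) :
    (fun i => H i j) ∈ hajosLattice H :=
  AddSubgroup.subset_closure ⟨j, rfl⟩

namespace IsHajosMatrix

variable {n : ℕ} {H : Matrix (Fin n) (Fin n) ℤ}

theorem isHajosVector_col (hH : IsHajosMatrix H) (j : Fin n) :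
    IsHajosVector fun i => H i j :=
  ⟨j, hH.1 j, fun i hij => hH.2.1 i j hij, fun i hji => hH.2.2 i j hji⟩

theorem eq_of_apply_eq_two (hH : IsHajosMatrix H) {i j : Fin n} (h : H i j = 2) : i = j := by
  rcases lt_trichotomy i j with hij | rfl | hji
  · simp [hH.2.1 i j hij] at h
  · rfl
  · rcases hH.2.2 i j hji with h' | h' <;> simp [h'] at h

theorem two_dvd_of_mem_hajosLattice (hH : IsHajosMatrix H) {u : Fin n → ℤ}
    (hu : u ∈ hajosLattice H) {i : Fin n} (hlead : ∀ j < i, u j = 0) : 2 ∣ u i := by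
  obtain ⟨c, rfl⟩ := mem_hajosLattice_iff.mp hu
  have hdiag : ∀ i, H i i ≠ 0 := fun i => by simp [hH.1 i]
  rw [Matrix.mulVec_apply_eq_diag_mul_of_mulVec_eq_zero hH.2.1 hdiag hlead, hH.1 i]
  exact dvd_mul_right 2 (c i)

theorem eq_zero_of_mem_hajosLattice (hH : IsHajosMatrix H) {u : Fin n → ℤ}
    (hu : u ∈ hajosLattice H) (hbound : ∀ i, -1 ≤ u i ∧ u i ≤ 1) : u = 0 := by
  funext i
  induction i using WellFoundedLT.induction with
  | _ i ih =>
    have := hH.two_dvd_of_mem_hajosLattice hu ih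
    have := hbound i
    simp only [Pi.zero_apply]
    omega

theorem eq_col_of_isHajosVector (hH : IsHajosMatrix H) {v : Fin n → ℤ}
    (hv : v ∈ hajosLattice H) (hvec : IsHajosVector v) : ∃ j, v = fun i => H i j := by
  obtain ⟨k, hk, hbefore, hafter⟩ := hvec
  refine ⟨k, sub_eq_zero.mp (hH.eq_zero_of_mem_hajosLattice
    (sub_mem hv (col_mem_hajosLattice H k)) fun i => ?_)⟩
  simp only [Pi.sub_apply]
  rcases lt_trichotomy i k with hik | rfl | hki
  · simp [hbefore i hik, hH.2.1 i k hik]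
  · simp [hk, hH.1 i]
  · rcases hafter i hki with h | h <;> rcases hH.2.2 i k hki with h' | h' <;> simp [h, h']

end IsHajosMatrix

/-- The only Hajós vectors in `Λ_H` are the columns of `H`; consequently, for Hajós matrices
`H, H'` of rank `n`, `Λ_H = Λ_{H'}` if and only if `H = H'`. -/
theorem hajosVectors_eq_columns {n : ℕ} (H H' : Matrix (Fin n) (Fin n) ℤ)
    (hH : IsHajosMatrix H) (hH' : IsHajosMatrix H') :
    (∀ v : Fin n → ℤ, v ∈ hajosLattice H → IsHajosVector v →
        ∃ j : Fin n, v = fun i => H i j) ∧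
    (hajosLattice H = hajosLattice H' ↔ H = H') := by
  refine ⟨fun v => hH.eq_col_of_isHajosVector, fun hΛ => ?_, fun h => h ▸ rfl⟩
  ext i j
  obtain ⟨m, hm⟩ := hH.eq_col_of_isHajosVector (hΛ ▸ col_mem_hajosLattice H' j)
    (hH'.isHajosVector_col j)
  have hmj : m = j := (hH.eq_of_apply_eq_two ((congrFun hm j).symm.trans (hH'.1 j))).symm
  subst hmj
  exact (congrFun hm i).symm
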